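/- With Λ = [0,1], Lebesgue measure, N = 2 and P(x_1,x_2) := 3|x_1 − x_2|, P is a symmetric probability density with P > 0 a.e. and P_{(1)}(x) = 3(x² − x + 1/2), but there is no x_2 ∈ [0,1] and constant γ > 0 such that P(x_1, x_2) ≥ γ P_{(1)}(x_1) for a.e. x_1 ∈ [0,1]. -/

import Mathlib

/-! The reduction `P₍₁₎` is positive on `[0,1]`, while `P(·, x₂)` vanishes at `x₂`. Both sides
of (27) are continuous and `[0,1]` is the closure of its interior, so an a.e. inequality between
them would hold everywhere on `[0,1]`, in particular at `x₁ = x₂`, where it reads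
`γ P₍₁₎(x₂) ≤ 0`. -/

open MeasureTheory

/-- The density of Example 4: `P(x₁,x₂) = 3|x₁ − x₂|` on `[0,1]²`. -/
noncomputable def exampleDensity (a b : ℝ) : ℝ := 3 * |a - b|

open Set

theorem intervalIntegral_abs_sub {a b x : ℝ} (hax : a ≤ x) (hxb : x ≤ b) :
    ∫ y in a..b, |x - y| = ((x - a) ^ 2 + (b - x) ^ 2) / 2 := by
  have hint : ∀ c d : ℝ, IntervalIntegrable (fun y => |x - y|) volume c d := fun c d =>
    (continuous_const.sub continuous_id).abs.intervalIntegrable c d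
  have left : ∫ y in a..x, |x - y| = ∫ y in a..x, (x - y) :=
    intervalIntegral.integral_congr fun y hy => by
      rw [uIcc_of_le hax] at hy
      exact abs_of_nonneg (sub_nonneg.2 hy.2)
  have right : ∫ y in x..b, |x - y| = ∫ y in x..b, (y - x) :=
    intervalIntegral.integral_congr fun y hy => by
      rw [uIcc_of_le hxb] at hy
      rw [abs_sub_comm]
      exact abs_of_nonneg (sub_nonneg.2 hy.1)
  rw [← intervalIntegral.integral_add_adjacent_intervals (hint a x) (hint x b), left, right,
    intervalIntegral.integral_comp_sub_left (fun y => y),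
    intervalIntegral.integral_comp_sub_right (fun y => y)]
  simp only [integral_id]
  ring

theorem measure_diagonal_eq_zero {α : Type*} [MeasurableSpace α] [MeasurableEq α]
    (μ ν : Measure α) [SFinite ν] [NullSingletonClass ν] : μ.prod ν (diagonal α) = 0 := by
  have slice : ∀ x : α, Prod.mk x ⁻¹' diagonal α = {x} := fun x => by ext y; simp [eq_comm]
  simp [Measure.prod_apply measurableSet_diagonal, slice]

theorem MeasureTheory.Measure.le_on_Icc_of_ae_le {X Y : Type*} [TopologicalSpace X]
    [LinearOrder X] [OrderTopology X] [DenselyOrdered X] {m : MeasurableSpace X} (μ : Measure X)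
    [μ.IsOpenPosMeasure] [TopologicalSpace Y] [SemilatticeInf Y] [ContinuousInf Y] [T2Space Y]
    {a b : X} (hne : a ≠ b) {f g : X → Y} (hfg : f ≤ᵐ[μ.restrict (Icc a b)] g)
    (hf : ContinuousOn f (Icc a b)) (hg : ContinuousOn g (Icc a b)) :
    ∀ x ∈ Icc a b, f x ≤ g x := fun _ hx =>
  inf_eq_left.1 <| Measure.eqOn_Icc_of_ae_eq μ hne (hfg.mono fun _ => inf_eq_left.2)
    (hf.inf hg) hf hx

theorem exampleDensity_comm (a b : ℝ) : exampleDensity a b = exampleDensity b a := by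
  rw [exampleDensity, exampleDensity, abs_sub_comm]

theorem continuous_exampleDensity : Continuous fun p : ℝ × ℝ => exampleDensity p.1 p.2 := by
  unfold exampleDensity
  fun_prop

theorem setIntegral_exampleDensity {x : ℝ} (hx : x ∈ Icc (0 : ℝ) 1) :
    ∫ y in Icc (0 : ℝ) 1, exampleDensity x y = 3 * (x ^ 2 - x + 1 / 2) := by
  rw [integral_Icc_eq_integral_Ioc, ← intervalIntegral.integral_of_le zero_le_one]
  simp only [exampleDensity]
  rw [intervalIntegral.integral_const_mul, intervalIntegral_abs_sub hx.1 hx.2]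
  ring

theorem setIntegral_prod_exampleDensity :
    ∫ p : ℝ × ℝ in Icc 0 1 ×ˢ Icc 0 1, exampleDensity p.1 p.2 = 1 := by
  have hint : IntegrableOn (fun p : ℝ × ℝ => exampleDensity p.1 p.2)
      (Icc 0 1 ×ˢ Icc 0 1) (volume.prod volume) :=
    continuous_exampleDensity.continuousOn.integrableOn_compact (isCompact_Icc.prod isCompact_Icc)
  rw [Measure.volume_eq_prod, setIntegral_prod _ hint,
    setIntegral_congr_fun measurableSet_Icc fun x hx => setIntegral_exampleDensity hx,
    integral_Icc_eq_integral_Ioc, ← intervalIntegral.integral_of_le zero_le_one]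
  norm_num

theorem ae_restrict_exampleDensity_pos (s : Set (ℝ × ℝ)) :
    ∀ᵐ p : ℝ × ℝ ∂(volume.restrict s), 0 < exampleDensity p.1 p.2 := by
  have off_diagonal : ∀ᵐ p : ℝ × ℝ, p ∉ diagonal ℝ :=
    measure_eq_zero_iff_ae_notMem.1 <| by
      rw [Measure.volume_eq_prod]
      exact measure_diagonal_eq_zero _ _
  refine ae_restrict_of_ae (off_diagonal.mono fun p hp => ?_)
  exact mul_pos three_pos (abs_sub_pos.2 hp)

theorem nonpos_of_ae_mul_le_exampleDensity {x₂ γ : ℝ} (hx₂ : x₂ ∈ Icc (0 : ℝ) 1)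
    (hγ : ∀ᵐ x₁ ∂(volume.restrict (Icc (0 : ℝ) 1)),
      γ * (3 * (x₁ ^ 2 - x₁ + 1 / 2)) ≤ exampleDensity x₁ x₂) :
    γ ≤ 0 := by
  have hle := Measure.le_on_Icc_of_ae_le volume zero_ne_one hγ (by fun_prop)
    (continuous_exampleDensity.comp (continuous_id.prodMk continuous_const)).continuousOn x₂ hx₂
  have hred : 0 < 3 * (x₂ ^ 2 - x₂ + 1 / 2) := by nlinarith [sq_nonneg (x₂ - 1 / 2)]
  simp only [exampleDensity, sub_self, abs_zero, mul_zero] at hle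
  exact nonpos_of_mul_nonpos_left hle hred

/-- Example 4: `P(x₁,x₂) = 3|x₁−x₂|` is a symmetric probability density on `[0,1]²`
with `P > 0` a.e. and one-variable reduction `P₍₁₎(x) = 3(x² − x + 1/2)`, yet there is
no `x₂ ∈ [0,1]` and constant `γ > 0` with `P(x₁,x₂) ≥ γ P₍₁₎(x₁)` for a.e. `x₁ ∈ [0,1]`:
condition (27) fails. -/
theorem exampleDensity_no_condition27 :
    (∀ a b : ℝ, exampleDensity a b = exampleDensity b a) ∧
    (∫ p : ℝ × ℝ in Set.Icc 0 1 ×ˢ Set.Icc 0 1, exampleDensity p.1 p.2) = 1 ∧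
    (∀ᵐ p : ℝ × ℝ ∂(volume.restrict (Set.Icc 0 1 ×ˢ Set.Icc 0 1)),
      0 < exampleDensity p.1 p.2) ∧
    (∀ x ∈ Set.Icc (0 : ℝ) 1,
      (∫ y in Set.Icc (0 : ℝ) 1, exampleDensity x y) = 3 * (x ^ 2 - x + 1 / 2)) ∧
    ¬ ∃ x₂ ∈ Set.Icc (0 : ℝ) 1, ∃ γ : ℝ, 0 < γ ∧
      ∀ᵐ x₁ ∂(volume.restrict (Set.Icc (0 : ℝ) 1)),
        γ * (3 * (x₁ ^ 2 - x₁ + 1 / 2)) ≤ exampleDensity x₁ x₂ := by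
  refine ⟨exampleDensity_comm, setIntegral_prod_exampleDensity,
    ae_restrict_exampleDensity_pos _, fun x hx => setIntegral_exampleDensity hx, ?_⟩
  rintro ⟨x₂, hx₂, γ, hγ_pos, hγ⟩
  exact (nonpos_of_ae_mul_le_exampleDensity hx₂ hγ).not_gt hγ_pos
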